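/- arXiv:1906.03960 — 16 statements merged into one kernel-verified Lean document; each statement's English description precedes it below -/
import Mathlib

section
/- Let X be a birack. Then the following are equivalent: (i) X is left distributive, i.e. x∘(y∘z) = (x∘y)∘(x∘z) for all x,y,z ∈ X; (ii) for all x,y ∈ X the left translations satisfy L_x = L_{x•y}, i.e. x∘z = (x•y)∘z for all x,y,z ∈ X; (iii) for all x,y ∈ X the left translations satisfy L_x = L_{x/•y}, i.e. x∘z = (x/•y)∘z for all x,y,z ∈ X. -/
/-- For a birack `(X, o, od, u, ud)` (where `o` is `∘`, `od` is `\∘`,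
`u` is `•`, `ud` is `/•`), the following are equivalent:
(i) left distributivity; (ii) `L_x = L_{x•y}`; (iii) `L_x = L_{x/•y}`. -/
theorem stmt_0 {X : Type*} (o od u ud : X → X → X)
    (h₁ : ∀ x y : X, o x (od x y) = y)
    (h₂ : ∀ x y : X, od x (o x y) = y)
    (h₃ : ∀ x y : X, u (ud y x) x = y)
    (h₄ : ∀ x y : X, ud (u y x) x = y)
    (h₅ : ∀ x y z : X, o x (o y z) = o (o x y) (o (u x y) z))
    (h₆ : ∀ x y z : X, u (o x y) (o (u x y) z) = o (u x (o y z)) (u y z))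
    (h₇ : ∀ x y z : X, u (u x y) z = u (u x (o y z)) (u y z)) :
    List.TFAE
      [∀ x y z : X, o x (o y z) = o (o x y) (o x z),
       ∀ x y z : X, o x z = o (u x y) z,
       ∀ x y z : X, o x z = o (ud x y) z] := by
  tfae_have 1 → 2 := by
    intro h x y z
    have e := h₅ x y z
    rw [h x y z] at e
    have := congrArg (od (o x y)) e
    rwa [h₂, h₂] at this
  tfae_have 2 → 3 := by
    intro h x y z
    have := h (ud x y) y z
    rw [h₃] at this; exact this.symm
  tfae_have 3 → 2 := by
    intro h x y z
    have := h (u x y) y z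
    rw [h₄] at this; exact this.symm
  tfae_have 2 → 1 := by
    intro h x y z
    rw [h₅ x y z, ← h x y z]
  tfae_finish
end

section
/- Let X be a birack. Then X is right distributive, i.e. (y•z)•x = (y•x)•(z•x) for all x,y,z ∈ X, if and only if for all x,y ∈ X the right translations satisfy R_x = R_{y∘x}, i.e. z•x = z•(y∘x) for all x,y,z ∈ X. -/
/-- A birack `(X, o, od, u, ud)` (where `o` is `∘`, `od` is `\∘`,
`u` is `•`, `ud` is `/•`) is right distributive iff `R_x = R_{y∘x}` for all `x, y`. -/
theorem stmt_1 {X : Type*} (o od u ud : X → X → X)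
    (h₁ : ∀ x y : X, o x (od x y) = y)
    (h₂ : ∀ x y : X, od x (o x y) = y)
    (h₃ : ∀ x y : X, u (ud y x) x = y)
    (h₄ : ∀ x y : X, ud (u y x) x = y)
    (h₅ : ∀ x y z : X, o x (o y z) = o (o x y) (o (u x y) z))
    (h₆ : ∀ x y z : X, u (o x y) (o (u x y) z) = o (u x (o y z)) (u y z))
    (h₇ : ∀ x y z : X, u (u x y) z = u (u x (o y z)) (u y z)) :
    (∀ x y z : X, u (u y z) x = u (u y x) (u z x)) ↔
      (∀ x y z : X, u z x = u z (o y x)) := by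
  constructor
  · intro hd x y z
    have key : u (u z (o y x)) (u y x) = u (u z x) (u y x) := by
      rw [← h₇, hd]
    have := congrArg (fun t => ud t (u y x)) key
    simpa [h₄] using this.symm
  · intro hr x y z
    rw [h₇ y z x, ← hr x z y]
end

section
/- Let X be a distributive birack. Then every left translation commutes with every right translation: L_x ∘ R_y = R_y ∘ L_x for all x,y ∈ X, i.e. x∘(z•y) = (x∘z)•y for all x,y,z ∈ X. -/
/-- In a distributive birack `(X, o, od, u, ud)` (where `o` is `∘`,
`od` is `\∘`, `u` is `•`, `ud` is `/•`), every left translation commutes with every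
right translation: `x∘(z•y) = (x∘z)•y`. -/
theorem stmt_2 {X : Type*} (o od u ud : X → X → X)
    (h₁ : ∀ x y : X, o x (od x y) = y)
    (h₂ : ∀ x y : X, od x (o x y) = y)
    (h₃ : ∀ x y : X, u (ud y x) x = y)
    (h₄ : ∀ x y : X, ud (u y x) x = y)
    (h₅ : ∀ x y z : X, o x (o y z) = o (o x y) (o (u x y) z))
    (h₆ : ∀ x y z : X, u (o x y) (o (u x y) z) = o (u x (o y z)) (u y z))
    (h₇ : ∀ x y z : X, u (u x y) z = u (u x (o y z)) (u y z))
    (hLD : ∀ x y z : X, o x (o y z) = o (o x y) (o x z))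
    (hRD : ∀ x y z : X, u (u y z) x = u (u y x) (u z x)) :
    ∀ x y z : X, o x (u z y) = u (o x z) y := by
  have lemA : ∀ x y z : X, o (u x y) z = o x z := by
    intro x y z
    have h := (h₅ x y z).symm.trans (hLD x y z)
    have h' := congrArg (od (o x y)) h
    simpa [h₂] using h'
  have lemB : ∀ x y z : X, u x (o y z) = u x z := by
    intro x y z
    have h := (h₇ x y z).symm.trans (hRD z x y)
    have h' := congrArg (fun w => ud w (u y z)) h
    simpa [h₄] using h'
  intro x y z
  have key := h₆ x z (od x y)
  rw [lemA, h₁, lemB, lemA] at key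
  have hz : u z y = u z (od x y) := by
    conv_lhs => rw [← h₁ x y]
    rw [lemB]
  rw [hz, ← key]
end

section
/- Let X be a set with four binary operations ∘, \∘, •, /•. Then (X,∘,\∘,•,/•) is a distributive birack if and only if the following conditions hold: (1) (X,∘,\∘) is a left rack, i.e. x∘(x\∘y) = y = x\∘(x∘y) and x∘(y∘z) = (x∘y)∘(x∘z) for all x,y,z; (2) (X,•,/•) is a right rack, i.e. (y/•x)•x = y = (y•x)/•x and (y•z)•x = (y•x)•(z•x) for all x,y,z; (3) for all x,y,z ∈ X: (x•y)∘z = x∘z, x•(y∘z) = x•z, and x∘(y•z) = (x∘y)•z. -/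
/-- A structure `(X, o, od, u, ud)` with four binary operations
(where `o` is `∘`, `od` is `\∘`, `u` is `•`, `ud` is `/•`) is a distributive birack
iff (1) `(X, o, od)` is a left rack, (2) `(X, u, ud)` is a right rack, and
(3) `(x•y)∘z = x∘z`, `x•(y∘z) = x•z`, `x∘(y•z) = (x∘y)•z` for all `x, y, z`. -/
theorem stmt_3 {X : Type*} (o od u ud : X → X → X) :
    ((∀ x y : X, o x (od x y) = y) ∧
     (∀ x y : X, od x (o x y) = y) ∧
     (∀ x y : X, u (ud y x) x = y) ∧
     (∀ x y : X, ud (u y x) x = y) ∧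
     (∀ x y z : X, o x (o y z) = o (o x y) (o (u x y) z)) ∧
     (∀ x y z : X, u (o x y) (o (u x y) z) = o (u x (o y z)) (u y z)) ∧
     (∀ x y z : X, u (u x y) z = u (u x (o y z)) (u y z)) ∧
     (∀ x y z : X, o x (o y z) = o (o x y) (o x z)) ∧
     (∀ x y z : X, u (u y z) x = u (u y x) (u z x)))
    ↔
    ((∀ x y : X, o x (od x y) = y) ∧
     (∀ x y : X, od x (o x y) = y) ∧
     (∀ x y z : X, o x (o y z) = o (o x y) (o x z)) ∧
     (∀ x y : X, u (ud y x) x = y) ∧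
     (∀ x y : X, ud (u y x) x = y) ∧
     (∀ x y z : X, u (u y z) x = u (u y x) (u z x)) ∧
     (∀ x y z : X, o (u x y) z = o x z) ∧
     (∀ x y z : X, u x (o y z) = u x z) ∧
     (∀ x y z : X, o x (u y z) = u (o x y) z)) := by
  constructor
  · rintro ⟨h1, h2, h3, h4, e1, e2, e3, ld, rd⟩
    have lcan : ∀ a p q : X, o a p = o a q → p = q := fun a p q h => by
      rw [← h2 a p, h, h2]
    have rcan : ∀ a p q : X, u p a = u q a → p = q := fun a p q h => by
      calc p = ud (u p a) a := (h4 a p).symm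
        _ = ud (u q a) a := by rw [h]
        _ = q := h4 a q
    have f1 : ∀ x y z : X, o (u x y) z = o x z := fun x y z =>
      lcan (o x y) _ _ (by rw [← e1, ld])
    have f2 : ∀ x y z : X, u x (o y z) = u x z := fun x y z =>
      rcan (u y z) _ _ (by rw [← e3, rd z x y])
    have f3 : ∀ x y z : X, o x (u y z) = u (o x y) z := fun x y z => by
      have h := e2 x y z
      simp only [f1, f2] at h
      exact h.symm
    exact ⟨h1, h2, ld, h3, h4, rd, f1, f2, f3⟩
  · rintro ⟨h1, h2, ld, h3, h4, rd, f1, f2, f3⟩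
    refine ⟨h1, h2, h3, h4, ?_, ?_, ?_, ld, rd⟩
    · intro x y z
      rw [f1, ← ld]
    · intro x y z
      rw [f1 x y z, f2, ← f3, f2 x y z, f1]
    · intro x y z
      rw [f2 x y z, ← rd]
end

section
/- Let X be a distributive birack. Then for each x ∈ X, the bijections L_x and R_x are automorphisms of (X,∘,\∘,•,/•); explicitly, for all x,y,z ∈ X: L_x(y∘z) = L_x(y)∘L_x(z), L_x(y\∘z) = L_x(y)\∘L_x(z), L_x(y•z) = L_x(y)•L_x(z), L_x(y/•z) = L_x(y)/•L_x(z), and the same four identities with R_x in place of L_x. -/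
/-- In a distributive birack `(X, o, od, u, ud)` (where `o` is `∘`,
`od` is `\∘`, `u` is `•`, `ud` is `/•`), for each `x` the bijections
`L_x : a ↦ x∘a` and `R_x : a ↦ a•x` are automorphisms of `(X, o, od, u, ud)`. -/
theorem stmt_4 {X : Type*} (o od u ud : X → X → X)
    (h₁ : ∀ x y : X, o x (od x y) = y)
    (h₂ : ∀ x y : X, od x (o x y) = y)
    (h₃ : ∀ x y : X, u (ud y x) x = y)
    (h₄ : ∀ x y : X, ud (u y x) x = y)
    (h₅ : ∀ x y z : X, o x (o y z) = o (o x y) (o (u x y) z))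
    (h₆ : ∀ x y z : X, u (o x y) (o (u x y) z) = o (u x (o y z)) (u y z))
    (h₇ : ∀ x y z : X, u (u x y) z = u (u x (o y z)) (u y z))
    (hLD : ∀ x y z : X, o x (o y z) = o (o x y) (o x z))
    (hRD : ∀ x y z : X, u (u y z) x = u (u y x) (u z x)) :
    ∀ x y z : X,
      o x (o y z) = o (o x y) (o x z) ∧
      o x (od y z) = od (o x y) (o x z) ∧
      o x (u y z) = u (o x y) (o x z) ∧
      o x (ud y z) = ud (o x y) (o x z) ∧
      u (o y z) x = o (u y x) (u z x) ∧
      u (od y z) x = od (u y x) (u z x) ∧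
      u (u y z) x = u (u y x) (u z x) ∧
      u (ud y z) x = ud (u y x) (u z x) := by
  have oinj : ∀ a b c : X, o a b = o a c → b = c := fun a b c h => by
    have := congrArg (od a) h; rwa [h₂, h₂] at this
  have uinj : ∀ t a b : X, u a t = u b t → a = b := fun t a b h => by
    have := congrArg (fun w => ud w t) h; simpa [h₄] using this
  have A : ∀ x y z : X, o (u x y) z = o x z := fun x y z =>
    oinj (o x y) _ _ (by rw [← h₅, hLD])
  have B : ∀ a b c : X, u a (o b c) = u a c := fun a b c =>
    uinj (u b c) _ _ (by rw [← h₇, hRD])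
  have oU : ∀ x y z : X, o x (u y z) = u (o x y) (o x z) := fun x y z => by
    have h := h₆ x y z
    rw [A, A] at h
    exact h.symm
  have uO : ∀ x y z : X, u (o y z) x = o (u y x) (u z x) := fun x y z => by
    have h := h₆ y z (od y x)
    rw [A, h₁, B] at h
    have e1 : u y (od y x) = u y x := by rw [← B y y (od y x), h₁]
    have e2 : u z (od y x) = u z x := by rw [← B z y (od y x), h₁]
    rw [e1, e2] at h
    exact h
  intro x y z
  refine ⟨hLD x y z, ?_, oU x y z, ?_, uO x y z, ?_, hRD x y z, ?_⟩
  · apply oinj (o x y)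
    rw [h₁, ← hLD, h₁]
  · apply uinj (o x z)
    rw [h₃, ← oU, h₃]
  · apply oinj (u y x)
    rw [h₁, ← uO, h₁]
  · apply uinj (u z x)
    rw [h₃, ← hRD, h₃]
end

section
/- Let G be a group and let (G,∘,\∘,•,/•) be its Wada switch, i.e. x∘y = x y⁻¹ x⁻¹, x\∘y = x⁻¹ y⁻¹ x, x•y = x y², x/•y = x y⁻². Then this birack is left distributive, i.e. x∘(y∘z) = (x∘y)∘(x∘z) for all x,y,z ∈ G, if and only if y² lies in the center Z(G) for every y ∈ G. -/
/-- The Wada switch operation `x ∘ y = x y⁻¹ x⁻¹`. -/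
def wadaO {G : Type*} [Group G] (x y : G) : G := x * y⁻¹ * x⁻¹

/-- The Wada switch of a group `G` is left distributive iff `y² ∈ Z(G)`
for every `y ∈ G`. -/
theorem stmt_6 {G : Type*} [Group G] :
    (∀ x y z : G, wadaO x (wadaO y z) = wadaO (wadaO x y) (wadaO x z)) ↔
      (∀ y : G, y ^ 2 ∈ Subgroup.center G) := by
  simp only [wadaO]
  constructor
  · intro h y
    rw [Subgroup.mem_center_iff]
    intro z
    have key := h 1 y z
    simp only [one_mul, inv_one, mul_one, inv_inv, mul_inv_rev] at key
    -- derive y * z * y⁻¹ = y⁻¹ * z * y from key, whatever its exact shape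
    have this1 : y * z * y⁻¹ = y⁻¹ * z * y := by
      rw [← mul_assoc] at key; exact key
    calc z * y ^ 2 = y * (y⁻¹ * z * y) * y := by rw [pow_two]; group
      _ = y * (y * z * y⁻¹) * y := by rw [← this1]
      _ = y ^ 2 * z := by rw [pow_two]; group
  · intro h x y z
    have hy := (Subgroup.mem_center_iff.mp (h y)) z⁻¹⁻¹
    have key : y * z⁻¹⁻¹ * y⁻¹ = y⁻¹ * z⁻¹⁻¹ * y := by
      calc y * z⁻¹⁻¹ * y⁻¹ = y⁻¹ * (y ^ 2 * z⁻¹⁻¹) * y⁻¹ := by rw [pow_two]; group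
        _ = y⁻¹ * (z⁻¹⁻¹ * y ^ 2) * y⁻¹ := by rw [hy]
        _ = y⁻¹ * z⁻¹⁻¹ * y := by rw [pow_two]; group
    calc x * (y * z⁻¹ * y⁻¹)⁻¹ * x⁻¹ = x * (y * z⁻¹⁻¹ * y⁻¹) * x⁻¹ := by group
      _ = x * (y⁻¹ * z⁻¹⁻¹ * y) * x⁻¹ := by rw [key]
      _ = x * y⁻¹ * x⁻¹ * (x * z⁻¹ * x⁻¹)⁻¹ * (x * y⁻¹ * x⁻¹)⁻¹ := by group
end

section
/- Let G be a group and let (G,∘,\∘,•,/•) be its Wada switch, i.e. x∘y = x y⁻¹ x⁻¹, x\∘y = x⁻¹ y⁻¹ x, x•y = x y², x/•y = x y⁻². Then this birack is right distributive, i.e. (y•z)•x = (y•x)•(z•x) for all x,y,z ∈ G, if and only if x⁴ = e and x² ∈ Z(G) for every x ∈ G. -/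
/-- The Wada switch operation `x • y = x y²`. -/
def wadaU {G : Type*} [Group G] (x y : G) : G := x * y ^ 2

/-- The Wada switch of a group `G` is right distributive iff `x⁴ = e` and
`x² ∈ Z(G)` for every `x ∈ G`. -/
theorem stmt_7 {G : Type*} [Group G] :
    (∀ x y z : G, wadaU (wadaU y z) x = wadaU (wadaU y x) (wadaU z x)) ↔
      (∀ x : G, x ^ 4 = 1 ∧ x ^ 2 ∈ Subgroup.center G) := by
  constructor
  · intro h x
    -- general consequence: z² x² = x² (z x²)²
    have key : ∀ z : G, z ^ 2 * x ^ 2 = x ^ 2 * (z * x ^ 2) ^ 2 := by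
      intro z
      have e := h x 1 z
      simp only [wadaU, one_mul, one_pow, mul_one] at e
      exact e
    have h4 : x ^ 4 = 1 := by
      have e := key 1
      simp only [one_pow, one_mul] at e
      -- e : x ^ 2 = x ^ 2 * (x ^ 2) ^ 2
      have : x ^ 2 * 1 = x ^ 2 * (x ^ 2) ^ 2 := by rw [mul_one]; exact e
      have h2 := (mul_left_cancel this).symm
      calc x ^ 4 = (x ^ 2) ^ 2 := by group
        _ = 1 := h2
    refine ⟨h4, Subgroup.mem_center_iff.mpr fun z => ?_⟩
    have e := key z
    -- e : z² x² = x² (z x²)² = x² z x² z x²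
    have e' : z ^ 2 * x ^ 2 = x ^ 2 * z * x ^ 2 * z * x ^ 2 := by
      rw [e, pow_two (z * x ^ 2)]; group
    -- cancel right x², using x⁴ = 1: multiply both sides
    have hx2 : x ^ 2 * x ^ 2 = 1 := by
      have : x ^ 2 * x ^ 2 = x ^ 4 := by group
      rw [this, h4]
    have e2 : z * z = x ^ 2 * z * x ^ 2 * z := by
      have := mul_right_cancel (a := z ^ 2) (b := x ^ 2) (c := x ^ 2 * z * x ^ 2 * z) e'
      rw [pow_two] at this; exact this
    -- cancel right z:
    have e3 : z = x ^ 2 * z * x ^ 2 := mul_right_cancel e2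
    -- so z * x² = x² * z * x⁴ = x² * z
    calc z * x ^ 2 = (x ^ 2 * z * x ^ 2) * x ^ 2 := by rw [← e3]
      _ = x ^ 2 * z * (x ^ 2 * x ^ 2) := by group
      _ = x ^ 2 * z := by rw [hx2, mul_one]
  · intro h x y z
    obtain ⟨h4, hc⟩ := h x
    have hcz := Subgroup.mem_center_iff.mp hc
    simp only [wadaU]
    have hx2 : x ^ 2 * x ^ 2 = 1 := by
      have : x ^ 2 * x ^ 2 = x ^ 4 := by group
      rw [this, h4]
    have key : z * x ^ 2 * (z * x ^ 2) = z ^ 2 := by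
      calc z * x ^ 2 * (z * x ^ 2) = z * (x ^ 2 * z) * x ^ 2 := by group
        _ = z * (z * x ^ 2) * x ^ 2 := by rw [← hcz z]
        _ = z * z * (x ^ 2 * x ^ 2) := by group
        _ = z ^ 2 := by rw [hx2, mul_one, pow_two]
    calc y * z ^ 2 * x ^ 2 = y * (z ^ 2 * x ^ 2) := by group
      _ = y * (x ^ 2 * z ^ 2) := by rw [hcz (z ^ 2)]
      _ = y * x ^ 2 * (z * x ^ 2 * (z * x ^ 2)) := by rw [key]; group
      _ = y * x ^ 2 * (z * x ^ 2) ^ 2 := by rw [pow_two (z * x ^ 2)]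
end

section
/- Let G be a group and let (G,∘,\∘,•,/•) be its Wada switch, i.e. x∘y = x y⁻¹ x⁻¹, x\∘y = x⁻¹ y⁻¹ x, x•y = x y², x/•y = x y⁻². Then this birack is involutive, i.e. (x∘y)∘(x•y) = x and (x∘y)•(x•y) = y for all x,y ∈ G, if and only if (xy)² = e for all x,y ∈ G. -/
/-- The Wada switch of a group `G` is involutive iff `(xy)² = e` for all
`x, y ∈ G`. -/
theorem stmt_8 {G : Type*} [Group G] :
    (∀ x y : G, wadaO (wadaO x y) (wadaU x y) = x ∧ wadaU (wadaO x y) (wadaU x y) = y) ↔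
      (∀ x y : G, (x * y) ^ 2 = 1) := by
  constructor
  · intro h x y
    have key : ∀ a : G, a ^ 2 = 1 := by
      intro a
      have := (h a 1).1
      simp only [wadaO, wadaU, inv_one, mul_one, one_pow] at this
      have h2 : a⁻¹ = a := by
        calc a⁻¹ = a * a⁻¹ * a⁻¹ * (a * a⁻¹)⁻¹ := by group
          _ = a := this
      rw [sq]
      nth_rewrite 1 [← h2]
      exact inv_mul_cancel a
    exact key (x * y)
  · intro h
    have key : ∀ a : G, a ^ 2 = 1 := fun a => by simpa using h a 1
    have m : ∀ a : G, a * a = 1 := fun a => by rw [← sq]; exact key a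
    have comm : ∀ x y : G, x * y = y * x := by
      intro x y
      have h1 := h x y
      rw [sq] at h1
      calc x * y = x * ((x * y) * (x * y)) * y := by rw [h1]; group
        _ = (x * x) * (y * x) * (y * y) := by group
        _ = 1 * (y * x) * 1 := by rw [m, m]
        _ = y * x := by group
    have inv : ∀ a : G, a⁻¹ = a := fun a => inv_eq_of_mul_eq_one_right (m a)
    intro x y
    constructor
    · simp only [wadaO, wadaU, key, inv, mul_one]
      calc x * y * x * x * (x * y * x)
          = x * (y * x) * (x * x) * (y * x) := by group
        _ = x * (y * x) * 1 * (y * x) := by rw [m]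
        _ = x * ((y * x) * (y * x)) := by group
        _ = x * 1 := by rw [m]
        _ = x := mul_one x
    · simp only [wadaO, wadaU, key, inv, mul_one]
      calc x * y * x = y * x * x := by rw [comm x y]
        _ = y * (x * x) := by group
        _ = y * 1 := by rw [m]
        _ = y := mul_one y
end

section
/- Let G be a group in which x⁴ = e and x² ∈ Z(G) for every x ∈ G, and define x•y = x y². Then x•(y•z) = x•y for all x,y,z ∈ G; that is, the Wada switch of G is right 2-reductive. -/
/-- If `G` is a group with `x⁴ = e` and `x² ∈ Z(G)` for all `x`, then the
Wada switch of `G` is right 2-reductive: `x•(y•z) = x•y`. -/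
theorem stmt_9 {G : Type*} [Group G]
    (h4 : ∀ x : G, x ^ 4 = 1) (hZ : ∀ x : G, x ^ 2 ∈ Subgroup.center G) :
    ∀ x y z : G, wadaU x (wadaU y z) = wadaU x y := by
  intro x y z
  have hc := (Subgroup.mem_center_iff.mp (hZ z)) y
  unfold wadaU
  have : (y * z ^ 2) ^ 2 = y ^ 2 := by
    have h4z := h4 z
    calc (y * z ^ 2) ^ 2 = y * z ^ 2 * (y * z ^ 2) := by rw [sq]
    _ = y * (z ^ 2 * y) * z ^ 2 := by group
    _ = y * (y * z ^ 2) * z ^ 2 := by rw [hc]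
    _ = y ^ 2 * z ^ 4 := by rw [sq y, show (4:ℕ) = 2+2 from rfl, pow_add]; group
    _ = y ^ 2 := by rw [h4z, mul_one]
  rw [this]
end

section
/- Let X be a left distributive birack that is left m-permutational for some m ≥ 2. Then X is left m-reductive. -/
/-- A left distributive birack `(X, o, od, u, ud)` (where `o` is `∘`,
`od` is `\∘`, `u` is `•`, `ud` is `/•`) that is left `m`-permutational for some `m ≥ 2`
is left `m`-reductive.
Here `(…((a∘x₁)∘x₂)…)∘x_m` is encoded as `List.foldl o a [x₁,…,x_m]`. -/
theorem stmt_11 {X : Type*} (o od u ud : X → X → X) (m : ℕ) (hm : 2 ≤ m)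
    (h₁ : ∀ x y : X, o x (od x y) = y)
    (h₂ : ∀ x y : X, od x (o x y) = y)
    (h₃ : ∀ x y : X, u (ud y x) x = y)
    (h₄ : ∀ x y : X, ud (u y x) x = y)
    (h₅ : ∀ x y z : X, o x (o y z) = o (o x y) (o (u x y) z))
    (h₆ : ∀ x y z : X, u (o x y) (o (u x y) z) = o (u x (o y z)) (u y z))
    (h₇ : ∀ x y z : X, u (u x y) z = u (u x (o y z)) (u y z))
    (hLD : ∀ x y z : X, o x (o y z) = o (o x y) (o x z))
    (hperm : ∀ (x y : X) (l : List X), l.length = m →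
      List.foldl o x l = List.foldl o y l) :
    ∀ (x₀ x₁ : X) (l : List X), l.length + 1 = m →
      List.foldl o x₀ (x₁ :: l) = List.foldl o x₁ l := by
  -- Key fact: in a left distributive left quasigroup, (a∘a)∘s = a∘s for all s.
  have key : ∀ a s : X, o (o a a) s = o a s := by
    intro a s
    have h := hLD a a (od a s)
    rw [h₁] at h
    exact h.symm
  intro x₀ x₁ l hl
  match l with
  | [] => simp at hl; omega
  | z :: l' =>
    have hlen : (x₁ :: z :: l').length = m := by
      simpa using hl
    calc List.foldl o x₀ (x₁ :: z :: l')
        = List.foldl o x₁ (x₁ :: z :: l') := hperm x₀ x₁ _ hlen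
      _ = List.foldl o (o (o x₁ x₁) z) l' := by simp [List.foldl]
      _ = List.foldl o (o x₁ z) l' := by rw [key]
      _ = List.foldl o x₁ (z :: l') := by simp [List.foldl]
end

section
/- Let X be a left distributive birack and define the relation ∼ on X by a ∼ b iff L_a = L_b (i.e. a∘x = b∘x for all x ∈ X). Then ∼ is a congruence of (X,∘,\∘,•,/•): it is an equivalence relation, and whenever a ∼ x and b ∼ y one has a∘b ∼ x∘y, a\∘b ∼ x\∘y, a•b ∼ x•y, and a/•b ∼ x/•y. -/
/-- In a left distributive birack `(X, o, od, u, ud)` (where `o` is `∘`,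
`od` is `\∘`, `u` is `•`, `ud` is `/•`), the relation `a ∼ b ⇔ L_a = L_b`
(i.e. `∀ z, a∘z = b∘z`) is a congruence: an equivalence relation compatible with all
four operations. -/
theorem stmt_12 {X : Type*} (o od u ud : X → X → X)
    (h₁ : ∀ x y : X, o x (od x y) = y)
    (h₂ : ∀ x y : X, od x (o x y) = y)
    (h₃ : ∀ x y : X, u (ud y x) x = y)
    (h₄ : ∀ x y : X, ud (u y x) x = y)
    (h₅ : ∀ x y z : X, o x (o y z) = o (o x y) (o (u x y) z))
    (h₆ : ∀ x y z : X, u (o x y) (o (u x y) z) = o (u x (o y z)) (u y z))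
    (h₇ : ∀ x y z : X, u (u x y) z = u (u x (o y z)) (u y z))
    (hLD : ∀ x y z : X, o x (o y z) = o (o x y) (o x z)) :
    Equivalence (fun a b : X => ∀ z, o a z = o b z) ∧
    (∀ a b x y : X, (∀ z, o a z = o x z) → (∀ z, o b z = o y z) →
      (∀ z, o (o a b) z = o (o x y) z) ∧
      (∀ z, o (od a b) z = o (od x y) z) ∧
      (∀ z, o (u a b) z = o (u x y) z) ∧
      (∀ z, o (ud a b) z = o (ud x y) z)) := by
  -- key fact: L_{x•y} = L_x
  have key : ∀ x y z : X, o (u x y) z = o x z := by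
    intro x y z
    have := (h₅ x y z).symm.trans (hLD x y z)
    calc o (u x y) z = od (o x y) (o (o x y) (o (u x y) z)) := (h₂ _ _).symm
      _ = od (o x y) (o (o x y) (o x z)) := by rw [← this]
      _ = o x z := h₂ _ _
  refine ⟨⟨fun a z => rfl, fun h z => (h z).symm, fun h h' z => (h z).trans (h' z)⟩,
    fun a b x y ha hb => ?_⟩
  refine ⟨fun z => ?_, fun z => ?_, fun z => ?_, fun z => ?_⟩
  · -- o compat
    have : o (o a b) (o a (od a z)) = o (o x y) (o a (od a z)) := by
      calc o (o a b) (o a (od a z)) = o a (o b (od a z)) := (hLD _ _ _).symm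
        _ = o x (o y (od a z)) := by rw [ha, hb]
        _ = o (o x y) (o x (od a z)) := hLD _ _ _
        _ = o (o x y) (o a (od a z)) := congrArg (o (o x y)) (ha (od a z)).symm
    rwa [h₁] at this
  · -- od compat
    have hw : ∀ w, o (od a b) w = o (od x y) w := by
      intro w
      have e1 : o a (o (od a b) w) = o b (o a w) := by
        rw [hLD, h₁]
      have e2 : o a (o (od x y) w) = o b (o a w) := by
        rw [ha, hLD, h₁, ← hb, ← ha]
      have : o a (o (od a b) w) = o a (o (od x y) w) := e1.trans e2.symm
      calc o (od a b) w = od a (o a (o (od a b) w)) := (h₂ _ _).symm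
        _ = od a (o a (o (od x y) w)) := by rw [this]
        _ = o (od x y) w := h₂ _ _
    exact hw z
  · rw [key, key]; exact ha z
  · calc o (ud a b) z = o (u (ud a b) b) z := (key _ _ _).symm
      _ = o a z := by rw [h₃]
      _ = o x z := ha z
      _ = o (u (ud x y) y) z := by rw [h₃]
      _ = o (ud x y) z := key _ _ _
end

section
/- Let X be a left distributive birack. Then for all x,y ∈ X: L_{x∘x} = L_x, L_{x•y} = L_x, and L_{x/•y} = L_x. Consequently the quotient birack X/∼ by the congruence a ∼ b ⇔ L_a = L_b is idempotent and its operations • and /• are trivial (u•v = u = u/•v in the quotient), i.e. X/∼ is a left derived birack. -/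
/-- In a left distributive birack `(X, o, od, u, ud)` (where `o` is `∘`,
`od` is `\∘`, `u` is `•`, `ud` is `/•`), one has `L_{x∘x} = L_x`, `L_{x•y} = L_x` and
`L_{x/•y} = L_x`; consequently the quotient by the congruence `a ∼ b ⇔ L_a = L_b` is
idempotent and its operations `•` and `/•` are trivial (`u v w ∼ v` and `ud v w ∼ v`),
i.e. the quotient is a left derived birack. -/
theorem stmt_13 {X : Type*} (o od u ud : X → X → X)
    (h₁ : ∀ x y : X, o x (od x y) = y)
    (h₂ : ∀ x y : X, od x (o x y) = y)
    (h₃ : ∀ x y : X, u (ud y x) x = y)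
    (h₄ : ∀ x y : X, ud (u y x) x = y)
    (h₅ : ∀ x y z : X, o x (o y z) = o (o x y) (o (u x y) z))
    (h₆ : ∀ x y z : X, u (o x y) (o (u x y) z) = o (u x (o y z)) (u y z))
    (h₇ : ∀ x y z : X, u (u x y) z = u (u x (o y z)) (u y z))
    (hLD : ∀ x y z : X, o x (o y z) = o (o x y) (o x z)) :
    (∀ x z : X, o (o x x) z = o x z) ∧
    (∀ x y z : X, o (u x y) z = o x z) ∧
    (∀ x y z : X, o (ud x y) z = o x z) ∧
    (∀ x z : X, o (u x x) z = o x z) := by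
  have hu : ∀ x y z : X, o (u x y) z = o x z := by
    intro x y z
    have := h₅ x y z
    rw [hLD] at this
    have := congrArg (od (o x y)) this
    rw [h₂, h₂] at this; exact this.symm
  refine ⟨?_, hu, ?_, fun x z => hu x x z⟩
  · intro x z
    have : o (o x x) z = o (o x x) (o x (od x z)) := by rw [h₁]
    rw [this, ← hLD, h₁]
  · intro x y z
    have := hu (ud x y) y z
    rw [h₃] at this; exact this.symm
end

section
/- Let X be a distributive birack. Then for every x ∈ X: L_{x∘x} = L_x, R_{x∘x} = R_x, L_{x•x} = L_x, and R_{x•x} = R_x; that is, x∘x ≈ x and x•x ≈ x for the relation a ≈ b ⇔ (L_a = L_b and R_a = R_b), so the retract Ret(X) = X/≈ is an idempotent birack. -/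
/-- In a distributive birack `(X, o, od, u, ud)` (where `o` is `∘`,
`od` is `\∘`, `u` is `•`, `ud` is `/•`), one has `L_{x∘x} = L_x`, `R_{x∘x} = R_x`,
`L_{x•x} = L_x` and `R_{x•x} = R_x`; i.e. `x∘x ≈ x` and `x•x ≈ x` for the relation
`a ≈ b ⇔ (L_a = L_b ∧ R_a = R_b)`, so the retract `X/≈` is an idempotent birack. -/
theorem stmt_14 {X : Type*} (o od u ud : X → X → X)
    (h₁ : ∀ x y : X, o x (od x y) = y)
    (h₂ : ∀ x y : X, od x (o x y) = y)
    (h₃ : ∀ x y : X, u (ud y x) x = y)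
    (h₄ : ∀ x y : X, ud (u y x) x = y)
    (h₅ : ∀ x y z : X, o x (o y z) = o (o x y) (o (u x y) z))
    (h₆ : ∀ x y z : X, u (o x y) (o (u x y) z) = o (u x (o y z)) (u y z))
    (h₇ : ∀ x y z : X, u (u x y) z = u (u x (o y z)) (u y z))
    (hLD : ∀ x y z : X, o x (o y z) = o (o x y) (o x z))
    (hRD : ∀ x y z : X, u (u y z) x = u (u y x) (u z x)) :
    ∀ x z : X,
      o (o x x) z = o x z ∧ u z (o x x) = u z x ∧
      o (u x x) z = o x z ∧ u z (u x x) = u z x := by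
  -- u a (o y z) = u a z
  have B : ∀ a y z : X, u a (o y z) = u a z := by
    intro a y z
    have e1 := h₇ a y z
    have e2 := hRD z a y
    have e3 : u (u a (o y z)) (u y z) = u (u a z) (u y z) := by
      rw [← e1, e2]
    have := congrArg (fun t => ud t (u y z)) e3
    simpa [h₄] using this
  -- o (u x y) z = o x z
  have C : ∀ x y z : X, o (u x y) z = o x z := by
    intro x y z
    have e1 := h₅ x y z
    have e2 := hLD x y z
    have e3 : o (o x y) (o (u x y) z) = o (o x y) (o x z) := by
      rw [← e1, e2]
    have := congrArg (fun t => od (o x y) t) e3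
    simpa [h₂] using this
  intro x z
  refine ⟨?_, ?_, C x x z, ?_⟩
  · -- o (o x x) z = o x z
    have := hLD x x (od x z)
    rw [h₁] at this
    exact this.symm
  · exact B z x x
  · -- u z (u x x) = u z x
    have := hRD x (ud z x) x
    rw [h₃] at this
    exact this.symm
end

section
/- Let X be a left distributive idempotent birack and let k ≥ 1. Then the following are equivalent: (i) X is left k-reductive; (ii) X is left k-permutational; (iii) the left multiplication group LMlt(X), the subgroup of the symmetric group on X generated by all left translations L_x, is nilpotent of class at most k−1 (i.e. its (k−1)-st lower central series term is trivial). -/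
/-!
Every element of `LMlt(X)` is an automorphism of `(X, ∘)`, so `g L_z g⁻¹ = L_{g z}`; in particular
`L_{x∘a} = L_x L_a L_x⁻¹`. Writing `x·l` for `(…(x∘l₁)…)∘lₙ`, the quotients `L_{x·l} L_{y·l}⁻¹`
with `|l| = n` thus form a conjugation-invariant set `Dₙ`, and `⁅L_{x·l} L_{y·l}⁻¹, L_z⁆` lies in
`Dₙ₊₁`. Hence `Dₙ ⊆ γₙ` and, by idempotency (`⁅L_x, L_z⁆ = L_{x∘z} L_{z∘z}⁻¹ ∈ D₁`),
`γₙ₊₁ ≤ ⟨Dₙ₊₁⟩`. So `γₙ` is trivial exactly when `L_{x·l}` does not depend on `x` for `|l| = n`,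
which is left `(n+1)`-permutationality.
-/

open scoped commutatorElement

namespace Subgroup

variable {G : Type*} [Group G]

theorem commutatorElement_mem_of_mem_closure {N : Subgroup G} {t : Set G} {a g : G}
    (ht : closure t ≤ normalizer (N : Set G)) (h : ∀ b ∈ t, ⁅a, b⁆ ∈ N) (hg : g ∈ closure t) :
    ⁅a, g⁆ ∈ N := by
  induction hg using closure_induction with
  | mem b hb => exact h b hb
  | one => simp
  | mul g₁ g₂ hg₁ _ ih₁ ih₂ =>
    rw [commutatorElement_mul_right_eq_mul_conj, mul_assoc, mul_assoc, ← mul_assoc g₁]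
    exact mul_mem ih₁ ((ht hg₁ _).mp ih₂)
  | inv g hg ih =>
    have := (ht (inv_mem hg) _).mp (inv_mem ih)
    rwa [commutatorElement_inv, inv_inv, ← commutatorElement_inv_right] at this

theorem commutator_closure_le {N : Subgroup G} {s t : Set G}
    (hs : closure s ≤ normalizer (N : Set G)) (ht : closure t ≤ normalizer (N : Set G))
    (h : ∀ a ∈ s, ∀ b ∈ t, ⁅a, b⁆ ∈ N) : ⁅closure s, closure t⁆ ≤ N := by
  rw [commutator_le]
  intro g hg g' hg'
  have hleft : ∀ a ∈ s, ⁅g', a⁆ ∈ N := fun a ha => by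
    rw [← commutatorElement_inv]
    exact inv_mem (commutatorElement_mem_of_mem_closure ht (h a ha) hg')
  rw [← commutatorElement_inv]
  exact inv_mem (commutatorElement_mem_of_mem_closure hs hleft hg)

theorem conj_mul_inv_conj_mem_lowerCentralSeries_succ {S : Subgroup G} {n : ℕ} {g h c : G}
    (hh : h ∈ S) (hc : c ∈ S) (hgh : g * h⁻¹ ∈ S.lowerCentralSeries n) :
    g * c * g⁻¹ * (h * c * h⁻¹)⁻¹ ∈ S.lowerCentralSeries (n + 1) := by
  have hconj : h⁻¹ * g ∈ S.lowerCentralSeries n := by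
    have := (S.self_le_normalizer_lowerCentralSeries n (inv_mem hh) _).mp hgh
    rwa [inv_inv, mul_assoc, inv_mul_cancel_right] at this
  have hcomm : ⁅h⁻¹ * g, c⁆ ∈ S.lowerCentralSeries (n + 1) :=
    commutator_mem_commutator hconj hc
  rw [show g * c * g⁻¹ * (h * c * h⁻¹)⁻¹ = h * ⁅h⁻¹ * g, c⁆ * h⁻¹ by group]
  exact (S.self_le_normalizer_lowerCentralSeries (n + 1) hh _).mp hcomm

theorem lowerCentralSeries_top_eq_bot_iff (H : Subgroup G) (n : ℕ) :
    (⊤ : Subgroup H).lowerCentralSeries n = ⊥ ↔ H.lowerCentralSeries n = ⊥ := by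
  rw [← top_subtype_lowerCentralSeries H, map_eq_bot_iff_of_injective _ H.subtype_injective]

end Subgroup

namespace LeftDistrib

open Subgroup

variable {X : Type*} {o : X → X → X} {L : X → Equiv.Perm X}

def IsLeftReductive (o : X → X → X) (k : ℕ) : Prop :=
  ∀ (x₀ x₁ : X) (l : List X), l.length + 1 = k → List.foldl o x₀ (x₁ :: l) = List.foldl o x₁ l

def IsLeftPermutational (o : X → X → X) (k : ℕ) : Prop :=
  ∀ (x y : X) (l : List X), l.length = k → List.foldl o x l = List.foldl o y l

theorem isLeftReductive_iff_isLeftPermutational (hidem : ∀ x, o x x = x) {k : ℕ} (hk : 1 ≤ k) :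
    IsLeftReductive o k ↔ IsLeftPermutational o k := by
  constructor
  · rintro h x y (_ | ⟨a, l⟩) hlen
    · simp at hlen; omega
    · rw [h x a l hlen, h y a l hlen]
  · intro h x₀ x₁ l hlen
    rw [h x₀ x₁ (x₁ :: l) hlen, List.foldl_cons, hidem]

theorem isLeftPermutational_succ_iff (hL : ∀ x a, L x a = o x a) (n : ℕ) :
    IsLeftPermutational o (n + 1) ↔
      ∀ (x y : X) (l : List X), l.length = n → L (List.foldl o x l) = L (List.foldl o y l) := by
  constructor
  · intro h x y l hlen
    ext a
    simpa [hL, List.foldl_append] using h x y (l ++ [a]) (by simp [hlen])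
  · intro h x y l hlen
    rcases l.eq_nil_or_concat' with rfl | ⟨l, a, rfl⟩
    · simp at hlen
    · simp only [List.length_append, List.length_singleton, add_left_inj] at hlen
      simp only [List.foldl_append, List.foldl_cons, List.foldl_nil, ← hL, h x y l hlen]

section Automorphisms

variable (hL : ∀ x a, L x a = o x a) (hLD : ∀ x y z, o x (o y z) = o (o x y) (o x z))
include hL hLD

theorem apply_op_of_mem_closure {g : Equiv.Perm X} (hg : g ∈ closure (Set.range L)) (a b : X) :
    g (o a b) = o (g a) (g b) := by
  induction hg using closure_induction generalizing a b with
  | mem _ hx =>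
    obtain ⟨x, rfl⟩ := hx
    simp only [hL]
    exact hLD x a b
  | one => rfl
  | mul g h _ _ ihg ihh => simp only [Equiv.Perm.mul_apply, ihh, ihg]
  | inv g _ ih =>
    apply g.injective
    simp [ih]

theorem apply_foldl_of_mem_closure {g : Equiv.Perm X} (hg : g ∈ closure (Set.range L))
    (x : X) (l : List X) : g (List.foldl o x l) = List.foldl o (g x) (l.map g) := by
  rw [List.foldl_map]
  exact (List.foldl_hom g fun a b => (apply_op_of_mem_closure hL hLD hg a b).symm).symm

theorem conj_of_mem_closure {g : Equiv.Perm X} (hg : g ∈ closure (Set.range L)) (z : X) :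
    g * L z * g⁻¹ = L (g z) := by
  ext a
  simp [hL, apply_op_of_mem_closure hL hLD hg]

theorem apply_op_eq_conj (x a : X) : L (o x a) = L x * L a * (L x)⁻¹ := by
  rw [← hL, conj_of_mem_closure hL hLD (subset_closure ⟨x, rfl⟩)]

end Automorphisms

def translationDiffs (o : X → X → X) (L : X → Equiv.Perm X) (n : ℕ) : Set (Equiv.Perm X) :=
  {d | ∃ (x y : X) (l : List X), l.length = n ∧
    d = L (List.foldl o x l) * (L (List.foldl o y l))⁻¹}

theorem translationDiffs_subset_closure (n : ℕ) :
    translationDiffs o L n ⊆ closure (Set.range L) := by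
  rintro _ ⟨x, y, l, -, rfl⟩
  exact mul_mem (subset_closure ⟨_, rfl⟩) (inv_mem (subset_closure ⟨_, rfl⟩))

section TranslationDiffs

variable (hL : ∀ x a, L x a = o x a) (hLD : ∀ x y z, o x (o y z) = o (o x y) (o x z))
include hL hLD

theorem closure_range_le_normalizer_translationDiffs (n : ℕ) :
    closure (Set.range L) ≤ normalizer (closure (translationDiffs o L n) : Set (Equiv.Perm X)) := by
  refine le_normalizer_closure_iff.mpr ?_
  rintro g hg _ ⟨x, y, l, hlen, rfl⟩
  refine subset_closure ⟨g x, g y, l.map g, by simp [hlen], ?_⟩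
  rw [← apply_foldl_of_mem_closure hL hLD hg, ← apply_foldl_of_mem_closure hL hLD hg,
    ← conj_of_mem_closure hL hLD hg, ← conj_of_mem_closure hL hLD hg]
  group

theorem commutator_mem_translationDiffs_succ {d : Equiv.Perm X} {n : ℕ}
    (hd : d ∈ translationDiffs o L n) (z : X) : ⁅d, L z⁆ ∈ translationDiffs o L (n + 1) := by
  obtain ⟨x, y, l, hlen, rfl⟩ := hd
  -- `z = (y·l) ∘ w` and `d z = (x·l) ∘ w` for `w = L_{y·l}⁻¹ z`
  refine ⟨x, y, l ++ [(L (List.foldl o y l))⁻¹ z], by simp [hlen], ?_⟩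
  rw [commutatorElement_def,
    conj_of_mem_closure hL hLD (translationDiffs_subset_closure n ⟨x, y, l, hlen, rfl⟩)]
  simp [List.foldl_append, ← hL]

theorem commutator_mem_translationDiffs_one (hidem : ∀ x, o x x = x) (x z : X) :
    ⁅L x, L z⁆ ∈ translationDiffs o L 1 :=
  ⟨x, z, [z], rfl, by simp [hidem, apply_op_eq_conj hL hLD, commutatorElement_def]⟩

theorem lowerCentralSeries_succ_le_closure_translationDiffs (hidem : ∀ x, o x x = x) (n : ℕ) :
    (closure (Set.range L)).lowerCentralSeries (n + 1) ≤
      closure (translationDiffs o L (n + 1)) := by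
  have hnorm := closure_range_le_normalizer_translationDiffs hL hLD
  induction n with
  | zero =>
    refine commutator_closure_le (hnorm 1) (hnorm 1) ?_
    rintro _ ⟨x, rfl⟩ _ ⟨z, rfl⟩
    exact subset_closure (commutator_mem_translationDiffs_one hL hLD hidem x z)
  | succ n ih =>
    refine (commutator_mono ih le_rfl).trans (commutator_closure_le ?_ (hnorm _) ?_)
    · exact (closure_le _).mpr (translationDiffs_subset_closure _) |>.trans (hnorm _)
    · rintro d hd _ ⟨z, rfl⟩
      exact subset_closure (commutator_mem_translationDiffs_succ hL hLD hd z)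

theorem translationDiffs_subset_lowerCentralSeries (n : ℕ) :
    translationDiffs o L n ⊆ (closure (Set.range L)).lowerCentralSeries n := by
  rintro _ ⟨x, y, l, rfl, rfl⟩
  induction l using List.reverseRecOn generalizing x y with
  | nil => exact translationDiffs_subset_closure 0 ⟨x, y, [], rfl, rfl⟩
  | append_singleton l a ih =>
    simp only [List.foldl_append, List.foldl_cons, List.foldl_nil, apply_op_eq_conj hL hLD,
      List.length_append, List.length_singleton]
    exact conj_mul_inv_conj_mem_lowerCentralSeries_succ (subset_closure ⟨_, rfl⟩)
      (subset_closure ⟨_, rfl⟩) (ih x y)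

theorem lowerCentralSeries_closure_eq_bot_iff (hidem : ∀ x, o x x = x) (n : ℕ) :
    (closure (Set.range L)).lowerCentralSeries n = ⊥ ↔
      ∀ (x y : X) (l : List X), l.length = n → L (List.foldl o x l) = L (List.foldl o y l) := by
  constructor
  · intro h x y l hlen
    have hmem : L (List.foldl o x l) * (L (List.foldl o y l))⁻¹ ∈ (⊥ : Subgroup _) :=
      h ▸ translationDiffs_subset_lowerCentralSeries hL hLD n ⟨x, y, l, hlen, rfl⟩
    rwa [mem_bot, mul_inv_eq_one] at hmem
  · intro h
    cases n with
    | zero =>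
      refine closure_eq_bot_iff.mpr ?_
      rintro _ ⟨x, rfl⟩
      ext a
      simpa [hL, hidem] using congrArg (· a) (h x a [] rfl)
    | succ n =>
      refine eq_bot_iff.mpr <|
        (lowerCentralSeries_succ_le_closure_translationDiffs hL hLD hidem n).trans
          ((closure_le _).mpr ?_)
      rintro _ ⟨x, y, l, hlen, rfl⟩
      simp [h x y l hlen]

end TranslationDiffs

end LeftDistrib

theorem stmt_15_general {X : Type*} (o u : X → X → X)
    (hLD : ∀ x y z : X, o x (o y z) = o (o x y) (o x z))
    (hidem : ∀ x : X, o x x = x ∧ u x x = x)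
    (L : X → Equiv.Perm X) (hL : ∀ x a : X, L x a = o x a)
    (k : ℕ) (hk : 1 ≤ k) :
    List.TFAE
      [∀ (x₀ x₁ : X) (l : List X), l.length + 1 = k →
         List.foldl o x₀ (x₁ :: l) = List.foldl o x₁ l,
       ∀ (x y : X) (l : List X), l.length = k →
         List.foldl o x l = List.foldl o y l,
       Subgroup.lowerCentralSeries (⊤ : Subgroup ↥(Subgroup.closure (Set.range L))) (k - 1) = ⊥] := by
  have hid : ∀ x, o x x = x := fun x => (hidem x).1
  tfae_have 1 ↔ 2 := LeftDistrib.isLeftReductive_iff_isLeftPermutational hid hk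
  tfae_have 2 ↔ 3 := by
    obtain ⟨n, rfl⟩ := Nat.exists_eq_add_of_le' hk
    rw [Nat.add_sub_cancel, Subgroup.lowerCentralSeries_top_eq_bot_iff,
      LeftDistrib.lowerCentralSeries_closure_eq_bot_iff hL hLD hid]
    exact LeftDistrib.isLeftPermutational_succ_iff hL n
  tfae_finish

/-- For a left distributive idempotent birack `(X, o, od, u, ud)`
(where `o` is `∘`, `od` is `\∘`, `u` is `•`, `ud` is `/•`) and `k ≥ 1`, the following
are equivalent: (i) left `k`-reductivity; (ii) left `k`-permutationality;
(iii) the left multiplication group `LMlt(X) = ⟨L_x : x ∈ X⟩ ≤ Sym(X)` is nilpotent of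
class at most `k-1`, i.e. its `(k-1)`-st lower central series term is trivial.
Here `L : X → Equiv.Perm X` is the family of left translations (`L x a = x∘a`), and
`(…((a∘x₁)∘x₂)…)∘x_k` is encoded as `List.foldl o a [x₁,…,x_k]`. -/
theorem stmt_15 {X : Type*} (o od u ud : X → X → X)
    (h₁ : ∀ x y : X, o x (od x y) = y)
    (h₂ : ∀ x y : X, od x (o x y) = y)
    (h₃ : ∀ x y : X, u (ud y x) x = y)
    (h₄ : ∀ x y : X, ud (u y x) x = y)
    (h₅ : ∀ x y z : X, o x (o y z) = o (o x y) (o (u x y) z))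
    (h₆ : ∀ x y z : X, u (o x y) (o (u x y) z) = o (u x (o y z)) (u y z))
    (h₇ : ∀ x y z : X, u (u x y) z = u (u x (o y z)) (u y z))
    (hLD : ∀ x y z : X, o x (o y z) = o (o x y) (o x z))
    (hidem : ∀ x : X, o x x = x ∧ u x x = x)
    (L : X → Equiv.Perm X) (hL : ∀ x a : X, L x a = o x a)
    (k : ℕ) (hk : 1 ≤ k) :
    List.TFAE
      [∀ (x₀ x₁ : X) (l : List X), l.length + 1 = k →
         List.foldl o x₀ (x₁ :: l) = List.foldl o x₁ l,
       ∀ (x y : X) (l : List X), l.length = k →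
         List.foldl o x l = List.foldl o y l,
       Subgroup.lowerCentralSeries (⊤ : Subgroup ↥(Subgroup.closure (Set.range L))) (k - 1) = ⊥] :=
  stmt_15_general o u hLD hidem L hL k hk
end

section
/- Let X be a left distributive birack and let k ≥ 2. Then the following are equivalent: (i) X is left k-reductive; (ii) X is left k-permutational; (iii) the left multiplication group LMlt(X), the subgroup of the symmetric group on X generated by all left translations L_x, is nilpotent of class at most k−1. -/
/-!
Left distributivity makes every element of `LMlt(X)` an automorphism of `(X, ∘)` and gives
`L_{a∘b} = L_a L_b L_a⁻¹`; in particular `L_{x∘x} = L_x`, which is all that separates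
`k`-reductivity from `k`-permutationality.

Let `K_j` be the group of permutations `p` with `(…((p x)∘x₁)…)∘x_j = (…(x∘x₁)…)∘x_j` for all
`x, x₁, …, x_j`. It is normalised by `LMlt(X)`, `K_0 = 1`, and `⁅g, h⁆ ∈ K_j` whenever
`g ∈ K_{j+1} ∩ LMlt(X)` and `h ∈ LMlt(X)`: on generators, `⁅g, L_z⁆ = L_{g z} L_z⁻¹`.
Reductivity says `L_x ∈ K_{k-1}`, hence `γ_n(LMlt(X)) ≤ K_{k-1-n}` and `γ_{k-1} = 1`.
Conversely `L_{a∘t} L_{b∘t}⁻¹ = ⁅L_a L_b⁻¹, L_{b∘t}⁆`, so by induction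
`L_{(…(x∘x₁)…)∘x_n} L_{(…(y∘x₁)…)∘x_n}⁻¹ ∈ γ_n`, and `γ_{k-1} = 1` gives permutationality.
-/

open Subgroup
open scoped commutatorElement

theorem Subgroup.top_lowerCentralSeries_eq_bot_iff {G : Type*} [Group G] (H : Subgroup G)
    (n : ℕ) : (⊤ : Subgroup H).lowerCentralSeries n = ⊥ ↔ H.lowerCentralSeries n = ⊥ := by
  rw [← map_eq_bot_iff_of_injective _ H.subtype_injective, top_subtype_lowerCentralSeries]

theorem Subgroup.commutatorElement_mem_of_mem_closure_s16 {G : Type*} [Group G] {N : Subgroup G}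
    {S : Set G} {g h : G} (hN : ∀ p ∈ closure S, ∀ n ∈ N, p * n * p⁻¹ ∈ N)
    (hS : ∀ s ∈ S, ⁅g, s⁆ ∈ N) (hh : h ∈ closure S) : ⁅g, h⁆ ∈ N := by
  induction hh using closure_induction with
  | mem s hs => exact hS s hs
  | one => simp
  | mul p q hp _ ihp ihq =>
      have e : ⁅g, p * q⁆ = ⁅g, p⁆ * (p * ⁅g, q⁆ * p⁻¹) := by
        simp only [commutatorElement_def]; group
      rw [e]
      exact mul_mem ihp (hN p hp _ ihq)
  | inv p hp ihp =>
      have e : ⁅g, p⁻¹⁆ = p⁻¹ * ⁅g, p⁆⁻¹ * p⁻¹⁻¹ := by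
        simp only [commutatorElement_def]; group
      rw [e]
      exact hN _ (inv_mem hp) _ (inv_mem ihp)

section LeftDistributive

variable {X : Type*} {o : X → X → X} {L : X → Equiv.Perm X}

def IsLeftReductive (o : X → X → X) (k : ℕ) : Prop :=
  ∀ (x₀ x₁ : X) (l : List X), l.length + 1 = k →
    List.foldl o x₀ (x₁ :: l) = List.foldl o x₁ l

def IsLeftPermutational (o : X → X → X) (k : ℕ) : Prop :=
  ∀ (x y : X) (l : List X), l.length = k → List.foldl o x l = List.foldl o y l

def autSubgroup (o : X → X → X) : Subgroup (Equiv.Perm X) where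
  carrier := {p | ∀ a b, p (o a b) = o (p a) (p b)}
  one_mem' _ _ := rfl
  mul_mem' {p q} hp hq a b := by rw [Equiv.Perm.mul_apply, hq a b, hp]; rfl
  inv_mem' {p} hp a b := p.injective <| by
    simp only [Equiv.Perm.coe_inv, Equiv.apply_symm_apply, hp (p.symm a) (p.symm b)]

def foldStabilizer (o : X → X → X) (j : ℕ) : Subgroup (Equiv.Perm X) where
  carrier := {p | ∀ x (l : List X), l.length = j → List.foldl o (p x) l = List.foldl o x l}
  one_mem' _ _ _ := rfl
  mul_mem' {p q} hp hq x l hl := (hp _ l hl).trans (hq x l hl)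
  inv_mem' {p} hp x l hl := by simpa using (hp (p⁻¹ x) l hl).symm

theorem mem_autSubgroup {p : Equiv.Perm X} :
    p ∈ autSubgroup o ↔ ∀ a b, p (o a b) = o (p a) (p b) := Iff.rfl

theorem mem_foldStabilizer {p : Equiv.Perm X} {j : ℕ} :
    p ∈ foldStabilizer o j ↔
      ∀ x (l : List X), l.length = j → List.foldl o (p x) l = List.foldl o x l := Iff.rfl

theorem foldStabilizer_zero : foldStabilizer o 0 = ⊥ := by
  ext p
  simp [foldStabilizer, Equiv.ext_iff]

theorem mul_inv_mem_foldStabilizer_iff {p q : Equiv.Perm X} {j : ℕ} :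
    p * q⁻¹ ∈ foldStabilizer o j ↔
      ∀ x (l : List X), l.length = j → List.foldl o (p x) l = List.foldl o (q x) l := by
  refine ⟨fun h x l hl => ?_, fun h x l hl => ?_⟩
  · simpa using h (q x) l hl
  · simpa using h (q⁻¹ x) l hl

theorem foldl_map_of_mem_autSubgroup {p : Equiv.Perm X} (hp : p ∈ autSubgroup o) (x : X)
    (l : List X) : p (List.foldl o x l) = List.foldl o (p x) (l.map p) := by
  induction l generalizing x with
  | nil => rfl
  | cons t l ih => simp only [List.foldl_cons, List.map_cons, ih, hp x t]

theorem conj_mem_foldStabilizer {p q : Equiv.Perm X} {j : ℕ} (hp : p ∈ autSubgroup o)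
    (hq : q ∈ foldStabilizer o j) : p * q * p⁻¹ ∈ foldStabilizer o j := by
  intro x l hl
  have hl' : l = (l.map ⇑p⁻¹).map p := by simp [Function.comp_def]
  calc List.foldl o (p (q (p⁻¹ x))) l
      = p (List.foldl o (q (p⁻¹ x)) (l.map ⇑p⁻¹)) := by
        rw [foldl_map_of_mem_autSubgroup hp, ← hl']
    _ = p (List.foldl o (p⁻¹ x) (l.map ⇑p⁻¹)) := by rw [hq _ _ (by simpa using hl)]
    _ = List.foldl o x l := by
        rw [foldl_map_of_mem_autSubgroup hp, ← hl', Equiv.Perm.coe_inv, Equiv.apply_symm_apply]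

theorem translation_apply_of_mem_autSubgroup (hL : ∀ x a, L x a = o x a)
    {p : Equiv.Perm X} (hp : p ∈ autSubgroup o) (a : X) : L (p a) = p * L a * p⁻¹ := by
  ext t
  simp only [Equiv.Perm.mul_apply, hL, hp a, Equiv.Perm.coe_inv, Equiv.apply_symm_apply]

theorem closure_range_le_autSubgroup (hLD : ∀ x y z, o x (o y z) = o (o x y) (o x z))
    (hL : ∀ x a, L x a = o x a) : closure (Set.range L) ≤ autSubgroup o := by
  rw [closure_le, Set.range_subset_iff]
  intro x a b
  simp only [hL]
  exact hLD x a b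

theorem translation_op (hLD : ∀ x y z, o x (o y z) = o (o x y) (o x z))
    (hL : ∀ x a, L x a = o x a) (a b : X) : L (o a b) = L a * L b * (L a)⁻¹ := by
  rw [← hL]
  exact translation_apply_of_mem_autSubgroup hL
    (closure_range_le_autSubgroup hLD hL (subset_closure ⟨a, rfl⟩)) b

theorem op_op_self (hLD : ∀ x y z, o x (o y z) = o (o x y) (o x z))
    (hL : ∀ x a, L x a = o x a) (x t : X) : o (o x x) t = o x t := by
  rw [← hL (o x x), ← hL x t, translation_op hLD hL, mul_inv_cancel_right]

theorem isLeftReductive_iff_range_subset (hL : ∀ x a, L x a = o x a) {j : ℕ} :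
    IsLeftReductive o (j + 1) ↔ Set.range L ⊆ foldStabilizer o j := by
  simp only [IsLeftReductive, Set.range_subset_iff, SetLike.mem_coe, mem_foldStabilizer, hL,
    List.foldl_cons, Nat.add_right_cancel_iff]

theorem IsLeftReductive.isLeftPermutational {k : ℕ} (h : IsLeftReductive o (k + 1)) :
    IsLeftPermutational o (k + 1) := by
  rintro x y (_ | ⟨x₁, l⟩) hl
  · simp at hl
  · rw [h x x₁ l hl, h y x₁ l hl]

theorem IsLeftPermutational.isLeftReductive (hLD : ∀ x y z, o x (o y z) = o (o x y) (o x z))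
    (hL : ∀ x a, L x a = o x a) {k : ℕ} (h : IsLeftPermutational o (k + 2)) :
    IsLeftReductive o (k + 2) := by
  rintro x₀ x₁ (_ | ⟨t, l⟩) hl
  · simp at hl
  · rw [h x₀ x₁ _ (by simpa using hl)]
    simp only [List.foldl_cons, op_op_self hLD hL]

theorem commutatorElement_mem_foldStabilizer (hLD : ∀ x y z, o x (o y z) = o (o x y) (o x z))
    (hL : ∀ x a, L x a = o x a) {g h : Equiv.Perm X} {j : ℕ}
    (hg : g ∈ foldStabilizer o (j + 1)) (hg' : g ∈ autSubgroup o)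
    (hh : h ∈ closure (Set.range L)) : ⁅g, h⁆ ∈ foldStabilizer o j := by
  refine commutatorElement_mem_of_mem_closure_s16
    (fun p hp _ hn => conj_mem_foldStabilizer (closure_range_le_autSubgroup hLD hL hp) hn)
    ?_ hh
  rintro _ ⟨z, rfl⟩
  rw [commutatorElement_def, ← translation_apply_of_mem_autSubgroup hL hg',
    mul_inv_mem_foldStabilizer_iff]
  intro x l hl
  simpa [hL] using hg z (x :: l) (by simp [hl])

theorem lowerCentralSeries_le_foldStabilizer (hLD : ∀ x y z, o x (o y z) = o (o x y) (o x z))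
    (hL : ∀ x a, L x a = o x a) (n : ℕ) :
    ∀ {j : ℕ}, closure (Set.range L) ≤ foldStabilizer o (j + n) →
      (closure (Set.range L)).lowerCentralSeries n ≤ foldStabilizer o j := by
  induction n with
  | zero => exact id
  | succ n ih =>
      intro j hG
      rw [Subgroup.lowerCentralSeries_succ, commutator_le]
      intro g hg h hh
      have hg' : g ∈ foldStabilizer o (j + 1) :=
        ih ((show j + 1 + n = j + (n + 1) by omega) ▸ hG) hg
      exact commutatorElement_mem_foldStabilizer hLD hL hg'
        (closure_range_le_autSubgroup hLD hL (lowerCentralSeries_le_self _ n hg)) hh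

theorem IsLeftReductive.lowerCentralSeries_eq_bot
    (hLD : ∀ x y z, o x (o y z) = o (o x y) (o x z)) (hL : ∀ x a, L x a = o x a) {k : ℕ}
    (h : IsLeftReductive o (k + 1)) : (closure (Set.range L)).lowerCentralSeries k = ⊥ := by
  rw [eq_bot_iff, ← foldStabilizer_zero (o := o)]
  apply lowerCentralSeries_le_foldStabilizer hLD hL k
  rw [zero_add, closure_le]
  exact (isLeftReductive_iff_range_subset hL).1 h

theorem translation_foldl_mul_inv_mem_lowerCentralSeries
    (hLD : ∀ x y z, o x (o y z) = o (o x y) (o x z)) (hL : ∀ x a, L x a = o x a)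
    (x y : X) (l : List X) :
    L (List.foldl o x l) * (L (List.foldl o y l))⁻¹ ∈
      (closure (Set.range L)).lowerCentralSeries l.length := by
  induction l using List.reverseRecOn with
  | nil => exact mul_mem (subset_closure ⟨x, rfl⟩) (inv_mem (subset_closure ⟨y, rfl⟩))
  | append_singleton l t ih =>
      simp only [List.foldl_append, List.foldl_cons, List.foldl_nil, List.length_append,
        List.length_singleton, Subgroup.lowerCentralSeries_succ]
      set a := List.foldl o x l
      set b := List.foldl o y l
      have e : L (o a t) * (L (o b t))⁻¹ = ⁅L a * (L b)⁻¹, L (o b t)⁆ := by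
        rw [commutatorElement_def, translation_op hLD hL, translation_op hLD hL]
        group
      rw [e]
      exact commutator_mem_commutator ih (subset_closure ⟨_, rfl⟩)

theorem isLeftPermutational_of_lowerCentralSeries_eq_bot
    (hLD : ∀ x y z, o x (o y z) = o (o x y) (o x z)) (hL : ∀ x a, L x a = o x a) {k : ℕ}
    (h : (closure (Set.range L)).lowerCentralSeries k = ⊥) : IsLeftPermutational o (k + 1) := by
  intro x y l hl
  rcases l.eq_nil_or_concat' with rfl | ⟨l, t, rfl⟩
  · simp at hl
  · have hmem := translation_foldl_mul_inv_mem_lowerCentralSeries hLD hL x y l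
    rw [show l.length = k by simpa using hl, h, mem_bot, mul_inv_eq_one] at hmem
    simp only [List.foldl_append, List.foldl_cons, List.foldl_nil, ← hL, hmem]

end LeftDistributive

theorem stmt_16_general {X : Type*} (o : X → X → X)
    (hLD : ∀ x y z : X, o x (o y z) = o (o x y) (o x z))
    (L : X → Equiv.Perm X) (hL : ∀ x a : X, L x a = o x a)
    (k : ℕ) (hk : 2 ≤ k) :
    List.TFAE
      [∀ (x₀ x₁ : X) (l : List X), l.length + 1 = k →
         List.foldl o x₀ (x₁ :: l) = List.foldl o x₁ l,
       ∀ (x y : X) (l : List X), l.length = k →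
         List.foldl o x l = List.foldl o y l,
       (⊤ : Subgroup (↥(Subgroup.closure (Set.range L)))).lowerCentralSeries (k - 1) = ⊥] := by
  obtain ⟨j, rfl⟩ : ∃ j, k = j + 2 := ⟨k - 2, by omega⟩
  rw [show j + 2 - 1 = j + 1 by omega, top_lowerCentralSeries_eq_bot_iff]
  tfae_have 1 → 2 := IsLeftReductive.isLeftPermutational (k := j + 1)
  tfae_have 2 → 1 := IsLeftPermutational.isLeftReductive hLD hL
  tfae_have 1 → 3 := IsLeftReductive.lowerCentralSeries_eq_bot hLD hL (k := j + 1)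
  tfae_have 3 → 2 := isLeftPermutational_of_lowerCentralSeries_eq_bot hLD hL
  tfae_finish

/-- For a left distributive birack `(X, o, od, u, ud)` (where `o` is `∘`,
`od` is `\∘`, `u` is `•`, `ud` is `/•`) and `k ≥ 2`, the following are equivalent:
(i) left `k`-reductivity; (ii) left `k`-permutationality; (iii) the left multiplication
group `LMlt(X) = ⟨L_x : x ∈ X⟩ ≤ Sym(X)` is nilpotent of class at most `k-1`.
Here `L : X → Equiv.Perm X` is the family of left translations (`L x a = x∘a`), and
`(…((a∘x₁)∘x₂)…)∘x_k` is encoded as `List.foldl o a [x₁,…,x_k]`. -/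
theorem stmt_16 {X : Type*} (o od u ud : X → X → X)
    (h₁ : ∀ x y : X, o x (od x y) = y)
    (h₂ : ∀ x y : X, od x (o x y) = y)
    (h₃ : ∀ x y : X, u (ud y x) x = y)
    (h₄ : ∀ x y : X, ud (u y x) x = y)
    (h₅ : ∀ x y z : X, o x (o y z) = o (o x y) (o (u x y) z))
    (h₆ : ∀ x y z : X, u (o x y) (o (u x y) z) = o (u x (o y z)) (u y z))
    (h₇ : ∀ x y z : X, u (u x y) z = u (u x (o y z)) (u y z))
    (hLD : ∀ x y z : X, o x (o y z) = o (o x y) (o x z))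
    (L : X → Equiv.Perm X) (hL : ∀ x a : X, L x a = o x a)
    (k : ℕ) (hk : 2 ≤ k) :
    List.TFAE
      [∀ (x₀ x₁ : X) (l : List X), l.length + 1 = k →
         List.foldl o x₀ (x₁ :: l) = List.foldl o x₁ l,
       ∀ (x y : X) (l : List X), l.length = k →
         List.foldl o x l = List.foldl o y l,
       (⊤ : Subgroup (↥(Subgroup.closure (Set.range L)))).lowerCentralSeries (k - 1) = ⊥] :=
  stmt_16_general o hLD L hL k hk
end

section
/- Let X be a distributive birack and let k ≥ 2. Then the following are equivalent: (i) X is k-reductive (both left and right k-reductive); (ii) X is k-permutational (both left and right k-permutational); (iii) the multiplication group Mlt(X), the subgroup of the symmetric group on X generated by all left translations L_x and all right translations R_x, is nilpotent of class at most k−1. -/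
/-!
Both translation maps turn the operations into conjugation, `L (x ∘ y) = L x * L y * (L x)⁻¹` and
`R (y • x) = R x * R y * (R x)⁻¹`, and every `L x` commutes with every `R y`.

(iii) ⇒ (i): by induction on the length, the left translations of `(…(x₀ ∘ x₁)…) ∘ x_{k-1}` and
`(…(x₁ ∘ x₂)…) ∘ x_{k-1}` agree modulo `γ_{k-1}(Mlt X)`, each step being a commutator.

(ii) ⇒ (iii): if the left translation of `(…(p ∘ w₁)…) ∘ w_n` does not depend on `p`, then
`L p * (L q)⁻¹ ∈ Z_n(Mlt X)`, since its commutator with a generator `L (q ∘ w)` is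
`L (p ∘ w) * L (q ∘ w)⁻¹` and it commutes with every `R`. For `n = k - 1` the identity
`⁅L a, L b⁆ = ⁅L a * (L b)⁻¹, L b⁆` then puts every `L a` into `Z_{k-1}`, and likewise every `R a`.

The right-hand conditions are the left-hand ones for `flip (•)`, read along reversed lists.
-/

open Function

open scoped commutatorElement

namespace Subgroup

variable {G : Type*} [Group G]

theorem mem_upperCentralSeries_succ_of_closure_eq_top {S : Set G} (hS : closure S = ⊤)
    {n : ℕ} {d : G} (h : ∀ s ∈ S, ⁅d, s⁆ ∈ Subgroup.upperCentralSeries G n) :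
    d ∈ Subgroup.upperCentralSeries G (n + 1) := by
  rw [mem_upperCentralSeries_succ_iff]
  intro g
  have hg : g ∈ closure S := hS ▸ mem_top g
  induction hg using closure_induction with
  | mem s hs => exact h s hs
  | one => simpa only [commutatorElement_one_right] using one_mem _
  | mul a b _ _ ha hb =>
    rw [commutatorElement_mul_right_eq_mul_conj, mul_assoc _ a, mul_assoc]
    exact mul_mem ha (by simpa only [mul_assoc] using Normal.conj_mem inferInstance _ hb a)
  | inv a _ ha =>
    rw [commutatorElement_inv_right, ← commutatorElement_inv]
    simpa only [inv_inv] using Normal.conj_mem inferInstance _ (inv_mem ha) a⁻¹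

theorem closure_union_centralizer_eq_top {X Y : Type*} {φ : X → G} {ψ : Y → G}
    (hgen : closure (Set.range φ ∪ Set.range ψ) = ⊤) (hcomm : ∀ a b, Commute (φ a) (ψ b)) :
    closure (Set.range φ ∪ centralizer (Set.range φ)) = ⊤ := by
  refine eq_top_iff.mpr (hgen ▸ closure_mono (Set.union_subset_union_right _ ?_))
  rintro _ ⟨b, rfl⟩
  exact mem_centralizer_iff.mpr (by rintro _ ⟨a, rfl⟩; exact (hcomm a b).eq)

end Subgroup

section LeftDistributive

variable {X : Type*} (op : X → X → X)

def LeftReductive (k : ℕ) : Prop :=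
  ∀ (x₀ x₁ : X) (l : List X), l.length + 1 = k → List.foldl op x₀ (x₁ :: l) = List.foldl op x₁ l

def LeftPermutational (k : ℕ) : Prop :=
  ∀ (x y : X) (l : List X), l.length = k → List.foldl op x l = List.foldl op y l

variable {op}

theorem LeftReductive.leftPermutational {k : ℕ} (hk : 1 ≤ k) (h : LeftReductive op k) :
    LeftPermutational op k := by
  rintro x y (_ | ⟨a, l⟩) hl
  · simp only [List.length_nil] at hl; omega
  · rw [h x a l hl, h y a l hl]

theorem rightReductive_iff_leftReductive_flip (u : X → X → X) (k : ℕ) :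
    (∀ (l : List X) (a b : X), l.length + 1 = k → List.foldr u b (l ++ [a]) = List.foldr u a l) ↔
      LeftReductive (flip u) k := by
  show _ ↔ LeftReductive (fun x y => u y x) k
  refine ⟨fun h x₀ x₁ l hl => ?_, fun h l a b hl => ?_⟩
  · simpa [← List.foldl_reverse, flip] using h l.reverse x₁ x₀ (by simpa using hl)
  · simpa [List.foldl_reverse, flip] using h b a l.reverse (by simpa using hl)

theorem rightPermutational_iff_leftPermutational_flip (u : X → X → X) (k : ℕ) :
    (∀ (x y : X) (l : List X), l.length = k → List.foldr u x l = List.foldr u y l) ↔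
      LeftPermutational (flip u) k := by
  show _ ↔ LeftPermutational (fun x y => u y x) k
  refine ⟨fun h x y l hl => ?_, fun h x y l hl => ?_⟩
  · simpa [← List.foldl_reverse, flip] using h x y l.reverse (by simpa using hl)
  · simpa [List.foldl_reverse, flip] using h x y l.reverse (by simpa using hl)

section Group

variable {G : Type*} [Group G] {φ : X → G}

theorem mul_inv_mem_lowerCentralSeries_foldl (hφ : ∀ a b, φ (op a b) = φ a * φ b * (φ a)⁻¹)
    {n : ℕ} {x y : X} (h : φ x * (φ y)⁻¹ ∈ (⊤ : Subgroup G).lowerCentralSeries n) (l : List X) :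
    φ (l.foldl op x) * (φ (l.foldl op y))⁻¹ ∈ (⊤ : Subgroup G).lowerCentralSeries (n + l.length) := by
  induction l generalizing n x y with
  | nil => exact h
  | cons c l ih =>
    rw [List.length_cons, add_comm l.length, ← add_assoc]
    refine ih ?_
    have hconj : φ (op x c) * (φ (op y c))⁻¹ = ⁅φ x * (φ y)⁻¹, φ (op y c)⁆ := by
      rw [hφ, hφ, commutatorElement_def]; group
    rw [hconj, Subgroup.lowerCentralSeries_succ]
    exact Subgroup.commutator_mem_commutator h (Subgroup.mem_top _)

theorem mul_inv_mem_lowerCentralSeries_foldl_op (hφ : ∀ a b, φ (op a b) = φ a * φ b * (φ a)⁻¹)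
    (a b : X) (l : List X) :
    φ (l.foldl op (op a b)) * (φ (l.foldl op b))⁻¹ ∈
      (⊤ : Subgroup G).lowerCentralSeries (1 + l.length) := by
  refine mul_inv_mem_lowerCentralSeries_foldl hφ ?_ l
  rw [hφ, ← commutatorElement_def, Subgroup.lowerCentralSeries_succ]
  exact Subgroup.commutator_mem_commutator (Subgroup.mem_top _) (Subgroup.mem_top _)

theorem mul_inv_mem_upperCentralSeries
    (hgen : Subgroup.closure (Set.range φ ∪ Subgroup.centralizer (Set.range φ)) = ⊤)
    (hφ : ∀ a b, φ (op a b) = φ a * φ b * (φ a)⁻¹) (hsurj : ∀ a, Surjective (op a)) (n : ℕ) (p q : X)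
    (h : ∀ l : List X, l.length = n → φ (l.foldl op p) = φ (l.foldl op q)) :
    φ p * (φ q)⁻¹ ∈ Subgroup.upperCentralSeries G n := by
  induction n generalizing p q with
  | zero => simpa [mul_inv_eq_one] using h [] rfl
  | succ n ih =>
    refine Subgroup.mem_upperCentralSeries_succ_of_closure_eq_top hgen ?_
    rintro s (⟨x, rfl⟩ | hs)
    · obtain ⟨w, rfl⟩ := hsurj q x
      have hconj : ⁅φ p * (φ q)⁻¹, φ (op q w)⁆ = φ (op p w) * (φ (op q w))⁻¹ := by
        rw [hφ, hφ, commutatorElement_def]; group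
      rw [hconj]
      exact ih _ _ fun l hl => h (w :: l) (by simp [hl])
    · have hφs : ∀ x, Commute (φ x) s := fun x => Subgroup.mem_centralizer_iff.mp hs _ ⟨x, rfl⟩
      rw [commutatorElement_eq_one_iff_commute.mpr ((hφs p).mul_left (hφs q).inv_left)]
      exact one_mem _

theorem range_subset_upperCentralSeries_succ
    (hgen : Subgroup.closure (Set.range φ ∪ Subgroup.centralizer (Set.range φ)) = ⊤) {n : ℕ}
    (h : ∀ p q, φ p * (φ q)⁻¹ ∈ Subgroup.upperCentralSeries G (n + 1)) :
    Set.range φ ⊆ Subgroup.upperCentralSeries G (n + 1) := by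
  rintro _ ⟨a, rfl⟩
  refine Subgroup.mem_upperCentralSeries_succ_of_closure_eq_top hgen ?_
  rintro s (⟨b, rfl⟩ | hs)
  · have hshift : ⁅φ a, φ b⁆ = ⁅φ a * (φ b)⁻¹, φ b⁆ := by
      simp only [commutatorElement_def]; group
    rw [hshift]
    exact Subgroup.mem_upperCentralSeries_succ_iff.mp (h a b) (φ b)
  · rw [commutatorElement_eq_one_iff_commute.mpr (Subgroup.mem_centralizer_iff.mp hs _ ⟨a, rfl⟩)]
    exact one_mem _

end Group

section Permutation

variable {H : Subgroup (Equiv.Perm X)} {φ : X → H} (hact : ∀ a z, (φ a : Equiv.Perm X) z = op a z)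
include hact

theorem map_op_eq_conj (hLD : ∀ x y z, op x (op y z) = op (op x y) (op x z)) (a b : X) :
    φ (op a b) = φ a * φ b * (φ a)⁻¹ := by
  refine eq_mul_inv_of_mul_eq (Subtype.ext (Equiv.ext fun z => ?_))
  simp only [Subgroup.coe_mul, Equiv.Perm.mul_apply, hact]
  exact (hLD a b z).symm

theorem op_surjective (a : X) : Surjective (op a) :=
  fun z => ⟨(φ a : Equiv.Perm X)⁻¹ z, by rw [← hact, Equiv.Perm.coe_inv, Equiv.apply_symm_apply]⟩

theorem map_foldl_eq_iff (x y : X) (l : List X) :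
    φ (l.foldl op x) = φ (l.foldl op y) ↔ ∀ z, (l ++ [z]).foldl op x = (l ++ [z]).foldl op y := by
  simp only [Subtype.ext_iff, Equiv.ext_iff, hact, List.foldl_append, List.foldl_cons,
    List.foldl_nil]

theorem leftReductive_of_lowerCentralSeries_eq_bot
    (hLD : ∀ x y z, op x (op y z) = op (op x y) (op x z)) {k : ℕ} (hk : 2 ≤ k)
    (h : (⊤ : Subgroup H).lowerCentralSeries (k - 1) = ⊥) : LeftReductive op k := by
  intro x₀ x₁ l hl
  obtain ⟨l, z, rfl⟩ : ∃ l' z, l = l' ++ [z] := by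
    rcases l.eq_nil_or_concat' with rfl | hl'
    · simp only [List.length_nil] at hl; omega
    · exact hl'
  have hmem := mul_inv_mem_lowerCentralSeries_foldl_op (map_op_eq_conj hact hLD) x₀ x₁ l
  rw [show 1 + l.length = k - 1 by
    simp only [List.length_append, List.length_singleton] at hl; omega, h, Subgroup.mem_bot, mul_inv_eq_one] at hmem
  exact (map_foldl_eq_iff hact _ _ l).mp hmem z

theorem range_subset_upperCentralSeries_of_leftPermutational
    (hLD : ∀ x y z, op x (op y z) = op (op x y) (op x z))
    (hgen : Subgroup.closure (Set.range φ ∪ Subgroup.centralizer (Set.range φ)) = ⊤)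
    {k : ℕ} (hk : 2 ≤ k) (h : LeftPermutational op k) :
    Set.range φ ⊆ Subgroup.upperCentralSeries H (k - 1) := by
  obtain ⟨n, rfl⟩ : ∃ n, k = n + 2 := ⟨k - 2, by omega⟩
  refine range_subset_upperCentralSeries_succ hgen fun p q => ?_
  refine mul_inv_mem_upperCentralSeries hgen (map_op_eq_conj hact hLD) (op_surjective hact) _ p q
    fun l hl => (map_foldl_eq_iff hact p q l).mpr fun z => h p q _ (by simp [hl])

end Permutation

end LeftDistributive

section Birack

variable {X : Type*} {o u : X → X → X}

theorem birack_left_right_assoc (ho : ∀ x, Injective (o x)) (hu : ∀ x, Injective (u · x))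
    (h₅ : ∀ x y z : X, o x (o y z) = o (o x y) (o (u x y) z))
    (h₆ : ∀ x y z : X, u (o x y) (o (u x y) z) = o (u x (o y z)) (u y z))
    (h₇ : ∀ x y z : X, u (u x y) z = u (u x (o y z)) (u y z))
    (hLD : ∀ x y z : X, o x (o y z) = o (o x y) (o x z))
    (hRD : ∀ x y z : X, u (u y z) x = u (u y x) (u z x)) (x y z : X) :
    u (o x y) z = o x (u y z) := by
  have absorb_left : ∀ x y z, o (u x y) z = o x z := fun x y z =>
    ho (o x y) (by rw [← h₅, hLD])
  have absorb_right : ∀ x y z, u x (o y z) = u x z := fun x y z =>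
    hu (u y z) (by dsimp only; rw [← h₇, hRD])
  simpa only [absorb_left, absorb_right] using h₆ x y z

theorem birack_commute_translations (L R : X → Equiv.Perm X) (hL : ∀ x a, L x a = o x a)
    (hR : ∀ x a, R x a = u a x)
    (h₅ : ∀ x y z : X, o x (o y z) = o (o x y) (o (u x y) z))
    (h₆ : ∀ x y z : X, u (o x y) (o (u x y) z) = o (u x (o y z)) (u y z))
    (h₇ : ∀ x y z : X, u (u x y) z = u (u x (o y z)) (u y z))
    (hLD : ∀ x y z : X, o x (o y z) = o (o x y) (o x z))
    (hRD : ∀ x y z : X, u (u y z) x = u (u y x) (u z x)) (x z : X) :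
    Commute (L x) (R z) := by
  have ho : ∀ x, Injective (o x) := fun x a b h => (L x).injective (by rwa [hL, hL])
  have hu : ∀ x, Injective (u · x) := fun x a b h => (R x).injective (by rwa [hR, hR])
  refine Equiv.ext fun a => ?_
  simp only [Equiv.Perm.mul_apply, hL, hR]
  exact (birack_left_right_assoc ho hu h₅ h₆ h₇ hLD hRD x a z).symm

end Birack

theorem stmt_19_general {X : Type*} (o u : X → X → X)
    (h₅ : ∀ x y z : X, o x (o y z) = o (o x y) (o (u x y) z))
    (h₆ : ∀ x y z : X, u (o x y) (o (u x y) z) = o (u x (o y z)) (u y z))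
    (h₇ : ∀ x y z : X, u (u x y) z = u (u x (o y z)) (u y z))
    (hLD : ∀ x y z : X, o x (o y z) = o (o x y) (o x z))
    (hRD : ∀ x y z : X, u (u y z) x = u (u y x) (u z x))
    (L R : X → Equiv.Perm X) (hL : ∀ x a : X, L x a = o x a) (hR : ∀ x a : X, R x a = u a x)
    (k : ℕ) (hk : 2 ≤ k) :
    List.TFAE
      [(∀ (x₀ x₁ : X) (l : List X), l.length + 1 = k →
          List.foldl o x₀ (x₁ :: l) = List.foldl o x₁ l) ∧
       (∀ (l : List X) (a b : X), l.length + 1 = k →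
          List.foldr u b (l ++ [a]) = List.foldr u a l),
       (∀ (x y : X) (l : List X), l.length = k →
          List.foldl o x l = List.foldl o y l) ∧
       (∀ (x y : X) (l : List X), l.length = k →
          List.foldr u x l = List.foldr u y l),
       (⊤ : Subgroup (↥(Subgroup.closure (Set.range L ∪ Set.range R)))).lowerCentralSeries (k - 1) = ⊥] := by
  let M := Subgroup.closure (Set.range L ∪ Set.range R)
  let eL : X → M := fun a => ⟨L a, Subgroup.subset_closure (.inl ⟨a, rfl⟩)⟩
  let eR : X → M := fun a => ⟨R a, Subgroup.subset_closure (.inr ⟨a, rfl⟩)⟩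
  have hactL : ∀ a z, (eL a : Equiv.Perm X) z = o a z := hL
  have hactR : ∀ a z, (eR a : Equiv.Perm X) z = flip u a z := hR
  have hRD' : ∀ x y z, flip u x (flip u y z) = flip u (flip u x y) (flip u x z) :=
    fun x y z => hRD x z y
  have hcomm : ∀ a b, Commute (eL a) (eR b) := fun a b =>
    Subtype.ext (birack_commute_translations L R hL hR h₅ h₆ h₇ hLD hRD a b)
  have hgen : Subgroup.closure (Set.range eL ∪ Set.range eR) = ⊤ := by
    refine eq_top_iff.mpr (Subgroup.closure_closure_coe_preimage.ge.trans (Subgroup.closure_mono ?_))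
    rintro g (⟨a, ha⟩ | ⟨a, ha⟩)
    exacts [.inl ⟨a, Subtype.ext ha⟩, .inr ⟨a, Subtype.ext ha⟩]
  rw [rightReductive_iff_leftReductive_flip, rightPermutational_iff_leftPermutational_flip]
  change List.TFAE [LeftReductive o k ∧ LeftReductive (flip u) k,
    LeftPermutational o k ∧ LeftPermutational (flip u) k, _]
  tfae_have 1 → 2 := And.imp (LeftReductive.leftPermutational (by omega))
    (LeftReductive.leftPermutational (by omega))
  tfae_have 3 → 1 := fun h =>
    ⟨leftReductive_of_lowerCentralSeries_eq_bot hactL hLD hk h,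
      leftReductive_of_lowerCentralSeries_eq_bot hactR hRD' hk h⟩
  tfae_have 2 → 3 := by
    rintro ⟨hl, hr⟩
    rw [Subgroup.lowerCentralSeries_eq_bot_iff_upperCentralSeries_eq_top, eq_top_iff, ← hgen,
      Subgroup.closure_le]
    exact Set.union_subset
      (range_subset_upperCentralSeries_of_leftPermutational hactL hLD
        (Subgroup.closure_union_centralizer_eq_top hgen hcomm) hk hl)
      (range_subset_upperCentralSeries_of_leftPermutational hactR hRD'
        (Subgroup.closure_union_centralizer_eq_top (Set.union_comm .. ▸ hgen)
          fun a b => (hcomm b a).symm) hk hr)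
  tfae_finish

/-- For a distributive birack `(X, o, od, u, ud)` (where `o` is `∘`,
`od` is `\∘`, `u` is `•`, `ud` is `/•`) and `k ≥ 2`, the following are equivalent:
(i) `X` is `k`-reductive (left and right); (ii) `X` is `k`-permutational (left and
right); (iii) the multiplication group `Mlt(X) = ⟨L_x, R_x : x ∈ X⟩ ≤ Sym(X)` is
nilpotent of class at most `k-1`.
Here `L, R : X → Equiv.Perm X` are the left and right translations (`L x a = x∘a`,
`R x a = a•x`); `(…((a∘x₁)∘x₂)…)∘x_k` is encoded as `List.foldl o a [x₁,…,x_k]` and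
`x₀•(x₁•(…(x_{k-1}•b)…))` as `List.foldr u b [x₀,…,x_{k-1}]`. -/
theorem stmt_19 {X : Type*} (o od u ud : X → X → X)
    (h₁ : ∀ x y : X, o x (od x y) = y)
    (h₂ : ∀ x y : X, od x (o x y) = y)
    (h₃ : ∀ x y : X, u (ud y x) x = y)
    (h₄ : ∀ x y : X, ud (u y x) x = y)
    (h₅ : ∀ x y z : X, o x (o y z) = o (o x y) (o (u x y) z))
    (h₆ : ∀ x y z : X, u (o x y) (o (u x y) z) = o (u x (o y z)) (u y z))
    (h₇ : ∀ x y z : X, u (u x y) z = u (u x (o y z)) (u y z))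
    (hLD : ∀ x y z : X, o x (o y z) = o (o x y) (o x z))
    (hRD : ∀ x y z : X, u (u y z) x = u (u y x) (u z x))
    (L R : X → Equiv.Perm X) (hL : ∀ x a : X, L x a = o x a) (hR : ∀ x a : X, R x a = u a x)
    (k : ℕ) (hk : 2 ≤ k) :
    List.TFAE
      [(∀ (x₀ x₁ : X) (l : List X), l.length + 1 = k →
          List.foldl o x₀ (x₁ :: l) = List.foldl o x₁ l) ∧
       (∀ (l : List X) (a b : X), l.length + 1 = k →
          List.foldr u b (l ++ [a]) = List.foldr u a l),
       (∀ (x y : X) (l : List X), l.length = k →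
          List.foldl o x l = List.foldl o y l) ∧
       (∀ (x y : X) (l : List X), l.length = k →
          List.foldr u x l = List.foldr u y l),
       (⊤ : Subgroup (↥(Subgroup.closure (Set.range L ∪ Set.range R)))).lowerCentralSeries (k - 1) = ⊥] :=
  stmt_19_general o u h₅ h₆ h₇ hLD hRD L R hL hR k hk
end
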